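/- arXiv:1703.05183 — 2 statements merged into one kernel-verified Lean document; each statement's English description precedes it below -/
import Mathlib

section
/- Let α > 0 and β > 1, let m = m(β) be the unique strictly positive solution of tanh(βm) = m, and let ν_N be the de Finetti measure. Then there exist constants C, δ > 0 such that for all N ∈ ℕ: ν_N([−m/2, m/2]) ≤ C·e^{−δ N^α}. -/
/-!
Since `tanh (β m) = m` we have `artanh m = β m`, so strict convexity of `artanh` on `[0, 1)` gives
`artanh t < β t` on `(0, m)`. As `F_β' t = 2 (artanh t / β - t) / (1 - t²)`, the even function
`F_β` is strictly decreasing on `[0, m]`. Hence on `[-m/2, m/2]` the unnormalised density is at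
most its value at `m/2`, while `[3m/4, m]` alone contributes at least
`(m/4) e^{-N^α F_β(3m/4)/2}` to `Z_N`; the ratio decays like `e^{-δ N^α}` with
`δ = (F_β(m/2) - F_β(3m/4))/2 > 0`. That `Z_N` is the integral of an integrable function follows
from `-log (1 - t²) ≤ 2 |artanh t|`, which bounds the exponent by a downward parabola in `artanh t`.
-/

open MeasureTheory Real Filter Set
open scoped ENNReal Topology

/-- The function `F_β`. -/
noncomputable def Fbeta (β t : ℝ) : ℝ :=
  1 / β * (1 / 2 * Real.log ((1 + t) / (1 - t))) ^ 2 + Real.log (1 - t ^ 2)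

/-- The normalizing constant `Z_N = ∫_{-1}^1 e^{-x F_β(t)/2}/(1-t²) dt` (with `x = N^α`). -/
noncomputable def Zconst (β x : ℝ) : ℝ :=
  ∫ t in Set.Ioo (-1 : ℝ) 1, Real.exp (-(x * Fbeta β t) / 2) / (1 - t ^ 2)

/-- The de Finetti measure `ν_N` with density proportional to `e^{-N^α F_β(t)/2}/(1-t²)`. -/
noncomputable def nuN (α β : ℝ) (N : ℕ) : Measure ℝ :=
  (ENNReal.ofReal (Zconst β ((N : ℝ) ^ α)))⁻¹ •
    ((volume.restrict (Set.Ioo (-1 : ℝ) 1)).withDensity fun t =>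
      ENNReal.ofReal (Real.exp (-((N : ℝ) ^ α * Fbeta β t) / 2) / (1 - t ^ 2)))

namespace Real

theorem artanh_eq_half_log_sub_log {t : ℝ} (ht : t ∈ Ioo (-1 : ℝ) 1) :
    artanh t = (log (1 + t) - log (1 - t)) / 2 := by
  rw [artanh_eq_half_log (Ioo_subset_Icc_self ht), log_div (by grind) (by grind)]
  ring

theorem hasDerivAt_artanh {t : ℝ} (ht : t ∈ Ioo (-1 : ℝ) 1) :
    HasDerivAt artanh (1 / (1 - t ^ 2)) t := by
  have hlog : HasDerivAt (fun s => (log (1 + s) - log (1 - s)) / 2)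
      ((1 / (1 + t) - -1 / (1 - t)) / 2) t :=
    ((((hasDerivAt_id t).const_add 1).log (by grind)).sub
      (((hasDerivAt_id t).const_sub 1).log (by grind))).div_const 2
  have heq : artanh =ᶠ[𝓝 t] fun s => (log (1 + s) - log (1 - s)) / 2 :=
    eventually_of_mem (Ioo_mem_nhds ht.1 ht.2) fun s hs => artanh_eq_half_log_sub_log hs
  have hval : (1 / (1 + t) - -1 / (1 - t)) / 2 = 1 / (1 - t ^ 2) := by
    have : 1 + t ≠ 0 := by grind
    have : 1 - t ≠ 0 := by grind
    have : 1 - t ^ 2 ≠ 0 := by nlinarith [ht.1, ht.2]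
    field_simp
    ring
  exact hval ▸ hlog.congr_of_eventuallyEq heq

theorem strictConvexOn_artanh : StrictConvexOn ℝ (Ico 0 1) artanh := by
  have hderiv : ∀ t ∈ Ico (0 : ℝ) 1, HasDerivAt artanh (1 / (1 - t ^ 2)) t :=
    fun t ht => hasDerivAt_artanh ⟨by grind, ht.2⟩
  refine StrictMonoOn.strictConvexOn_of_deriv (convex_Ico 0 1)
    (fun t ht => (hderiv t ht).continuousAt.continuousWithinAt) ?_
  rw [interior_Ico]
  intro s hs t ht hst
  rw [(hderiv s (Ioo_subset_Ico_self hs)).deriv, (hderiv t (Ioo_subset_Ico_self ht)).deriv]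
  gcongr
  · nlinarith [ht.2, ht.1]
  · nlinarith [hs.1]

theorem artanh_lt_div_mul_artanh {t m : ℝ} (ht : 0 < t) (htm : t < m) (hm : m < 1) :
    artanh t < t / m * artanh m := by
  have hm0 : 0 < m := ht.trans htm
  have key := strictConvexOn_artanh.2 (show (0 : ℝ) ∈ Ico 0 1 by simp) ⟨hm0.le, hm⟩ hm0.ne
    (show 0 < 1 - t / m by rw [sub_pos, div_lt_one hm0]; exact htm)
    (show 0 < t / m by positivity) (by ring)
  simpa [div_mul_cancel₀ t hm0.ne'] using key

theorem neg_log_one_sub_sq_le {t : ℝ} (ht : t ∈ Ioo (-1 : ℝ) 1) :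
    -log (1 - t ^ 2) ≤ 2 * |artanh t| := by
  have hsplit : log (1 - t ^ 2) = log (1 + t) + log (1 - t) := by
    rw [← log_mul (by grind) (by grind)]
    ring_nf
  rw [hsplit, artanh_eq_half_log_sub_log ht]
  rcases le_total 0 t with h | h
  · have := log_nonneg (show 1 ≤ 1 + t by linarith)
    have := le_abs_self ((log (1 + t) - log (1 - t)) / 2)
    linarith
  · have := log_nonneg (show 1 ≤ 1 - t by linarith)
    have := neg_abs_le ((log (1 + t) - log (1 - t)) / 2)
    linarith

end Real

theorem Fbeta_eq_artanh {β t : ℝ} (ht : t ∈ Ioo (-1 : ℝ) 1) :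
    Fbeta β t = artanh t ^ 2 / β + log (1 - t ^ 2) := by
  rw [Fbeta, artanh_eq_half_log (Ioo_subset_Icc_self ht)]
  ring

theorem Fbeta_neg (β t : ℝ) : Fbeta β (-t) = Fbeta β t := by
  have h : (1 + -t) / (1 - -t) = ((1 + t) / (1 - t))⁻¹ := by
    rw [inv_div]
    ring_nf
  rw [Fbeta, Fbeta, h, log_inv, neg_sq]
  ring

theorem hasDerivAt_Fbeta (β : ℝ) {t : ℝ} (ht : t ∈ Ioo (-1 : ℝ) 1) :
    HasDerivAt (Fbeta β) (2 / (1 - t ^ 2) * (artanh t / β - t)) t := by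
  have h12 : 1 - t ^ 2 ≠ 0 := by nlinarith [ht.1, ht.2]
  have hsum : HasDerivAt (fun s => artanh s ^ 2 / β + log (1 - s ^ 2))
      (2 / (1 - t ^ 2) * (artanh t / β - t)) t :=
    ((((hasDerivAt_artanh ht).fun_pow 2).div_const β).fun_add
      (((hasDerivAt_pow 2 t).const_sub 1).log h12)).congr_deriv (by field_simp; ring)
  have heq : Fbeta β =ᶠ[𝓝 t] fun s => artanh s ^ 2 / β + log (1 - s ^ 2) :=
    eventually_of_mem (Ioo_mem_nhds ht.1 ht.2) fun s hs => Fbeta_eq_artanh hs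
  exact hsum.congr_of_eventuallyEq heq

theorem Fbeta_strictAntiOn {β m : ℝ} (hβ : 0 < β) (hm : 0 < m) (htanh : tanh (β * m) = m) :
    StrictAntiOn (Fbeta β) (Icc 0 m) := by
  have hm1 : m < 1 := htanh ▸ tanh_lt_one _
  have hartanh : artanh m = β * m := by
    conv_lhs => rw [← htanh]
    exact artanh_tanh _
  have hderiv : ∀ t ∈ Icc 0 m, HasDerivAt (Fbeta β) (2 / (1 - t ^ 2) * (artanh t / β - t)) t :=
    fun t ht => hasDerivAt_Fbeta β ⟨by linarith [ht.1], by linarith [ht.2]⟩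
  refine strictAntiOn_of_deriv_neg (convex_Icc 0 m)
    (fun t ht => (hderiv t ht).continuousAt.continuousWithinAt) fun t ht => ?_
  rw [interior_Icc] at ht
  rw [(hderiv t (Ioo_subset_Icc_self ht)).deriv]
  have hlt : artanh t < β * t := by
    calc artanh t < t / m * artanh m := artanh_lt_div_mul_artanh ht.1 ht.2 hm1
      _ = β * t := by rw [hartanh]; field_simp
  have h12 : 0 < 1 - t ^ 2 := by nlinarith [ht.1, ht.2]
  have hneg : artanh t / β - t < 0 := by rw [sub_neg, div_lt_iff₀ hβ]; linarith
  exact mul_neg_of_pos_of_neg (by positivity) hneg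

noncomputable def deFinettiDensity (β x t : ℝ) : ℝ :=
  exp (-(x * Fbeta β t) / 2) / (1 - t ^ 2)

theorem deFinettiDensity_nonneg (β x : ℝ) {t : ℝ} (ht : t ∈ Ioo (-1 : ℝ) 1) :
    0 ≤ deFinettiDensity β x t :=
  div_nonneg (exp_pos _).le (by nlinarith [ht.1, ht.2])

theorem neg_mul_sq_add_two_mul_abs_le {a b u : ℝ} (ha : 0 < a) :
    -(a * u ^ 2) + 2 * b * |u| ≤ b ^ 2 / a := by
  rw [le_div_iff₀ ha, ← sq_abs u]
  nlinarith [sq_nonneg (a * |u| - b)]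

theorem deFinettiDensity_le {β x t : ℝ} (hβ : 0 < β) (hx : 0 < x) (ht : t ∈ Ioo (-1 : ℝ) 1) :
    deFinettiDensity β x t ≤ exp ((x / 2 + 1) ^ 2 / (x / (2 * β))) := by
  have h12 : 0 < 1 - t ^ 2 := by nlinarith [ht.1, ht.2]
  have hexponent : -(x * Fbeta β t) / 2 - log (1 - t ^ 2)
      = -(x / (2 * β) * artanh t ^ 2) + (x / 2 + 1) * -log (1 - t ^ 2) := by
    rw [Fbeta_eq_artanh ht]
    field_simp
    ring
  rw [deFinettiDensity, ← exp_log h12, ← exp_sub, exp_le_exp, hexponent]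
  calc -(x / (2 * β) * artanh t ^ 2) + (x / 2 + 1) * -log (1 - t ^ 2)
      ≤ -(x / (2 * β) * artanh t ^ 2) + 2 * (x / 2 + 1) * |artanh t| := by
        have := neg_log_one_sub_sq_le ht
        nlinarith
    _ ≤ (x / 2 + 1) ^ 2 / (x / (2 * β)) := neg_mul_sq_add_two_mul_abs_le (by positivity)

theorem integrableOn_deFinettiDensity {β x : ℝ} (hβ : 0 < β) (hx : 0 < x) :
    IntegrableOn (deFinettiDensity β x) (Ioo (-1) 1) := by
  have hmeas : Measurable (deFinettiDensity β x) := by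
    unfold deFinettiDensity Fbeta
    fun_prop
  refine Measure.integrableOn_of_bounded (M := exp ((x / 2 + 1) ^ 2 / (x / (2 * β))))
    measure_Ioo_lt_top.ne hmeas.aestronglyMeasurable ?_
  filter_upwards [ae_restrict_mem measurableSet_Ioo] with t ht
  rw [Real.norm_of_nonneg (deFinettiDensity_nonneg β x ht)]
  exact deFinettiDensity_le hβ hx ht

theorem deFinettiDensity_le_of_abs_le {β x a t : ℝ} (hanti : AntitoneOn (Fbeta β) (Icc 0 a))
    (ha : a < 1) (hx : 0 ≤ x) (ht : |t| ≤ a) :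
    deFinettiDensity β x t ≤ deFinettiDensity β x a := by
  have hF : Fbeta β a ≤ Fbeta β t := by
    have hFabs : Fbeta β |t| = Fbeta β t := by
      rcases abs_choice t with h | h <;> rw [h]
      exact Fbeta_neg β t
    exact hFabs ▸ hanti ⟨abs_nonneg t, ht⟩ ⟨(abs_nonneg t).trans ht, le_rfl⟩ ht
  have hsq : t ^ 2 ≤ a ^ 2 := by
    rw [← sq_abs t]
    exact pow_le_pow_left₀ (abs_nonneg t) ht 2
  have ha2 : 0 < 1 - a ^ 2 := by nlinarith [abs_nonneg t]
  refine div_le_div₀ (exp_pos _).le (exp_le_exp.2 ?_) ha2 (by linarith)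
  nlinarith

theorem setLIntegral_deFinettiDensity_Icc_le {β x a : ℝ} (hanti : AntitoneOn (Fbeta β) (Icc 0 a))
    (ha₀ : 0 ≤ a) (ha₁ : a < 1) (hx : 0 ≤ x) :
    ∫⁻ t in Icc (-a) a, ENNReal.ofReal (deFinettiDensity β x t)
      ≤ ENNReal.ofReal (2 * a * deFinettiDensity β x a) := by
  calc ∫⁻ t in Icc (-a) a, ENNReal.ofReal (deFinettiDensity β x t)
      ≤ ∫⁻ _ in Icc (-a) a, ENNReal.ofReal (deFinettiDensity β x a) :=
        setLIntegral_mono measurable_const fun t ht =>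
          ENNReal.ofReal_le_ofReal (deFinettiDensity_le_of_abs_le hanti ha₁ hx (abs_le.2 ht))
    _ = ENNReal.ofReal (2 * a * deFinettiDensity β x a) := by
        rw [setLIntegral_const, Real.volume_Icc, ← ENNReal.ofReal_mul
          (deFinettiDensity_nonneg β x ⟨by linarith, ha₁⟩)]
        ring_nf

theorem mul_exp_le_Zconst {β x b c : ℝ} (hβ : 0 < β) (hx : 0 < x)
    (hanti : AntitoneOn (Fbeta β) (Icc b c)) (hb : -1 < b) (hbc : b ≤ c) (hc : c < 1) :
    (c - b) * exp (-(x * Fbeta β b) / 2) ≤ Zconst β x := by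
  have hsub : Icc b c ⊆ Ioo (-1) 1 := Icc_subset_Ioo hb hc
  have hint := integrableOn_deFinettiDensity hβ hx
  calc (c - b) * exp (-(x * Fbeta β b) / 2)
      = ∫ _ in Icc b c, exp (-(x * Fbeta β b) / 2) := by
        rw [setIntegral_const, Real.volume_real_Icc_of_le hbc, smul_eq_mul]
    _ ≤ ∫ t in Icc b c, deFinettiDensity β x t := by
        refine setIntegral_mono_on (integrableOn_const measure_Icc_lt_top.ne)
          (hint.mono_set hsub) measurableSet_Icc fun t ht => ?_
        have h12 : 0 < 1 - t ^ 2 := by nlinarith [(hsub ht).1, (hsub ht).2]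
        calc exp (-(x * Fbeta β b) / 2) ≤ exp (-(x * Fbeta β t) / 2) := by
              gcongr
              exact hanti ⟨le_rfl, hbc⟩ ht ht.1
          _ ≤ deFinettiDensity β x t := le_div_self (exp_pos _).le h12 (by nlinarith)
    _ ≤ Zconst β x :=
        setIntegral_mono_set hint
          ((ae_restrict_mem measurableSet_Ioo).mono fun t ht => deFinettiDensity_nonneg β x ht)
          hsub.eventuallyLE

theorem nuN_le_ofReal_div {α β U L : ℝ} {N : ℕ} {S : Set ℝ} (hS : MeasurableSet S)
    (hSsub : S ⊆ Ioo (-1) 1)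
    (hU : ∫⁻ t in S, ENNReal.ofReal (deFinettiDensity β ((N : ℝ) ^ α) t) ≤ ENNReal.ofReal U)
    (hL : 0 < L) (hLZ : L ≤ Zconst β ((N : ℝ) ^ α)) :
    nuN α β N S ≤ ENNReal.ofReal (U / L) := by
  rw [nuN, Measure.smul_apply, smul_eq_mul, withDensity_apply _ hS,
    Measure.restrict_restrict hS, inter_eq_left.mpr hSsub, ENNReal.ofReal_div_of_pos hL,
    ENNReal.div_eq_inv_mul]
  exact mul_le_mul' (ENNReal.inv_le_inv.2 (ENNReal.ofReal_le_ofReal hLZ)) hU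

theorem nuN_Icc_le_of_antitoneOn {α β a b c : ℝ} {N : ℕ} (hβ : 0 < β) (hN : 1 ≤ N)
    (hanti : AntitoneOn (Fbeta β) (Icc 0 c)) (ha : 0 ≤ a) (hab : a ≤ b) (hbc : b < c)
    (hc : c < 1) :
    nuN α β N (Icc (-a) a) ≤ ENNReal.ofReal (2 * a / ((c - b) * (1 - a ^ 2)) *
      exp (-((Fbeta β a - Fbeta β b) / 2) * (N : ℝ) ^ α)) := by
  set x := (N : ℝ) ^ α
  have hx : 0 < x := rpow_pos_of_pos (by exact_mod_cast hN) α
  calc nuN α β N (Icc (-a) a)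
      ≤ ENNReal.ofReal (2 * a * deFinettiDensity β x a /
          ((c - b) * exp (-(x * Fbeta β b) / 2))) :=
        nuN_le_ofReal_div measurableSet_Icc (Icc_subset_Ioo (by linarith) (by linarith))
          (setLIntegral_deFinettiDensity_Icc_le
            (hanti.mono (Icc_subset_Icc_right (by linarith))) ha (by linarith) hx.le)
          (mul_pos (by linarith) (exp_pos _))
          (mul_exp_le_Zconst hβ hx (hanti.mono (Icc_subset_Icc_left (by linarith)))
            (by linarith) hbc.le hc)
    _ = _ := by
        have hsplit : exp (-(x * Fbeta β a) / 2)
            = exp (-((Fbeta β a - Fbeta β b) / 2) * x) * exp (-(x * Fbeta β b) / 2) := by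
          rw [← exp_add]
          ring_nf
        have : 1 - a ^ 2 ≠ 0 := by nlinarith
        have : c - b ≠ 0 := by linarith
        rw [deFinettiDensity, hsplit]
        field_simp

theorem nuN_center_bound_general (α β m : ℝ) (hβ : 1 < β)
    (hm : 0 < m) (htanh : Real.tanh (β * m) = m) :
    ∃ C > 0, ∃ δ > 0, ∀ N : ℕ, 1 ≤ N →
      nuN α β N (Set.Icc (-(m / 2)) (m / 2)) ≤
        ENNReal.ofReal (C * Real.exp (-δ * (N : ℝ) ^ α)) := by
  have hβ₀ : 0 < β := by linarith
  have hm₁ : m < 1 := htanh ▸ tanh_lt_one _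
  have hanti := Fbeta_strictAntiOn hβ₀ hm htanh
  have hgap : Fbeta β (3 * m / 4) < Fbeta β (m / 2) :=
    hanti ⟨by linarith, by linarith⟩ ⟨by linarith, by linarith⟩ (by linarith)
  refine ⟨2 * (m / 2) / ((m - 3 * m / 4) * (1 - (m / 2) ^ 2)),
    div_pos (by linarith) (mul_pos (by linarith) (by nlinarith)),
    (Fbeta β (m / 2) - Fbeta β (3 * m / 4)) / 2, by linarith, fun N hN =>
    nuN_Icc_le_of_antitoneOn hβ₀ hN hanti.antitoneOn (by linarith) (by linarith) (by linarith) hm₁⟩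

/-- For `α > 0`, `β > 1`: there are `C, δ > 0` with `ν_N([-m/2, m/2]) ≤ C e^{-δ N^α}`
for all `N ≥ 1`. -/
theorem nuN_center_bound (α β m : ℝ) (hα : 0 < α) (hβ : 1 < β)
    (hm : 0 < m) (htanh : Real.tanh (β * m) = m) :
    ∃ C > 0, ∃ δ > 0, ∀ N : ℕ, 1 ≤ N →
      nuN α β N (Set.Icc (-(m / 2)) (m / 2)) ≤
        ENNReal.ofReal (C * Real.exp (-δ * (N : ℝ) ^ α)) :=
  nuN_center_bound_general α β m hβ hm htanh
end

section
/- Let α > 0 and β > 1, let m = m(β) be the unique strictly positive solution of tanh(βm) = m, and let ν_N be the de Finetti measure. Then for every ℓ ∈ ℕ: lim_{N→∞} ∫_{m/2}^{1} (1 + m² − 2mt)^ℓ dν_N(t) = (1/2)·(1 − m²)^ℓ. -/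
open MeasureTheory Real Filter Set
open scoped ENNReal Topology

/-!
Substituting `t = tanh s` turns `ν_N` into the probability measure on `ℝ` with density
proportional to `exp (-N^α G_β(s))`, where `G_β(s) = s²/(2β) - log cosh s`: indeed
`F_β(tanh s) = 2 G_β(s)` and `dt = (1 - t²) ds`. The function `G_β` is even, and since
`tanh s / s` strictly decreases on `(0, ∞)` (strict concavity of `tanh`) and equals `1/β` at
`s = βm`, `G_β` decreases on `[0, βm]` and increases on `[βm, ∞)`. Laplace's method therefore
concentrates the mass at `±βm`, half on each side by evenness. The region `t ≥ m/2`, i.e.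
`s ≥ artanh (m/2)`, contains a neighbourhood of `βm` and none of `-βm`, so the integral tends to
half the value of the integrand at `t = tanh (βm) = m`.
-/

namespace Real

theorem strictMono_tanh : StrictMono tanh := fun x y h => by
  rwa [← artanh_lt_artanh_iff ⟨neg_one_lt_tanh x, tanh_lt_one x⟩
    ⟨neg_one_lt_tanh y, tanh_lt_one y⟩, artanh_tanh, artanh_tanh]

theorem one_sub_tanh_sq (x : ℝ) : 1 - tanh x ^ 2 = (cosh x ^ 2)⁻¹ := by
  have := cosh_sq_sub_sinh_sq x
  have := (cosh_pos x).ne'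
  rw [tanh_eq_sinh_div_cosh]
  field_simp
  linarith

theorem one_sub_tanh_sq_pos (x : ℝ) : 0 < 1 - tanh x ^ 2 := by
  rw [one_sub_tanh_sq]
  have := cosh_pos x
  positivity

theorem hasDerivAt_tanh (x : ℝ) : HasDerivAt tanh (1 - tanh x ^ 2) x := by
  have h := (hasDerivAt_sinh x).div (hasDerivAt_cosh x) (cosh_pos x).ne'
  rw [show sinh / cosh = tanh from funext fun y => (tanh_eq_sinh_div_cosh y).symm] at h
  refine h.congr_deriv ?_
  rw [one_sub_tanh_sq, ← sq, ← sq, cosh_sq_sub_sinh_sq, one_div]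

theorem continuous_tanh : Continuous tanh :=
  continuous_iff_continuousAt.2 fun x => (hasDerivAt_tanh x).continuousAt

theorem strictConcaveOn_tanh : StrictConcaveOn ℝ (Ici 0) tanh := by
  refine StrictAntiOn.strictConcaveOn_of_deriv (convex_Ici 0) continuous_tanh.continuousOn ?_
  rw [interior_Ici]
  intro x hx y hy hxy
  have hx' : 0 < tanh x := tanh_zero ▸ strictMono_tanh hx
  have := strictMono_tanh hxy
  simp only [(hasDerivAt_tanh _).deriv]
  nlinarith

theorem tanh_image_Ici (c : ℝ) : tanh '' Ici c = Ico (tanh c) 1 := by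
  refine Subset.antisymm (image_subset_iff.2 fun s hs => ⟨strictMono_tanh.monotone hs,
    tanh_lt_one s⟩) fun t ⟨hct, ht1⟩ => ?_
  have ht : t ∈ Ioo (-1) 1 := ⟨(neg_one_lt_tanh c).trans_le hct, ht1⟩
  refine ⟨artanh t, ?_, tanh_artanh ht⟩
  rw [mem_Ici, ← strictMono_tanh.le_iff_le, tanh_artanh ht]
  exact hct

theorem cosh_le_exp_abs (x : ℝ) : cosh x ≤ exp |x| := by
  rw [← cosh_abs, cosh_eq]
  have : exp (-|x|) ≤ exp |x| := exp_le_exp.2 (by linarith [abs_nonneg x])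
  linarith

end Real

theorem integral_image_tanh {S : Set ℝ} (hS : MeasurableSet S) (f : ℝ → ℝ) :
    ∫ t in tanh '' S, f t = ∫ s in S, (1 - tanh s ^ 2) * f (tanh s) := by
  rw [integral_image_eq_integral_abs_deriv_smul hS
    (fun s _ => (hasDerivAt_tanh s).hasDerivWithinAt) strictMono_tanh.injective.injOn]
  simp only [abs_of_pos (one_sub_tanh_sq_pos _), smul_eq_mul]

noncomputable def Gbeta (β s : ℝ) : ℝ := s ^ 2 / (2 * β) - log (cosh s)

theorem Gbeta_abs (β s : ℝ) : Gbeta β |s| = Gbeta β s := by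
  simp only [Gbeta, sq_abs, cosh_abs]

theorem continuous_Gbeta (β : ℝ) : Continuous (Gbeta β) :=
  (continuous_pow 2).div_const _ |>.sub <| continuous_cosh.log fun s => (cosh_pos s).ne'

theorem hasDerivAt_Gbeta (β s : ℝ) : HasDerivAt (Gbeta β) (s / β - tanh s) s := by
  have h := ((hasDerivAt_pow 2 s).div_const (2 * β)).sub
    ((hasDerivAt_cosh s).log (cosh_pos s).ne')
  refine h.congr_deriv ?_
  rw [tanh_eq_sinh_div_cosh]
  norm_num
  ring

theorem Fbeta_tanh (β s : ℝ) : Fbeta β (tanh s) = 2 * Gbeta β s := by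
  rw [Fbeta, ← artanh_eq_half_log ⟨(neg_one_lt_tanh s).le, (tanh_lt_one s).le⟩, artanh_tanh,
    one_sub_tanh_sq, log_inv, log_pow, Gbeta]
  ring

theorem one_sub_tanh_sq_mul_exp_Fbeta (β x s : ℝ) :
    (1 - tanh s ^ 2) * (exp (-(x * Fbeta β (tanh s)) / 2) / (1 - tanh s ^ 2)) =
      exp (-(x * Gbeta β s)) := by
  rw [mul_div_cancel₀ _ (one_sub_tanh_sq_pos s).ne', Fbeta_tanh]
  ring_nf

section Shape

variable {β m : ℝ}

theorem div_lt_tanh_of_lt (hβ : 0 < β) (hm : 0 < m) (htanh : tanh (β * m) = m) {s : ℝ}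
    (hs : 0 < s) (hsm : s < β * m) : s / β < tanh s := by
  have hβm : 0 < β * m := mul_pos hβ hm
  have h := strictConcaveOn_tanh.secant_strict_mono self_mem_Ici hs.le hβm.le hs.ne' hβm.ne' hsm
  rw [htanh, tanh_zero, sub_zero, sub_zero, sub_zero, sub_zero, div_mul_cancel_right₀ hm.ne',
    inv_lt_iff_one_lt_mul₀ hβ, div_mul_eq_mul_div, one_lt_div hs] at h
  rwa [div_lt_iff₀ hβ]

theorem tanh_lt_div_of_lt (hβ : 0 < β) (hm : 0 < m) (htanh : tanh (β * m) = m) {s : ℝ}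
    (hsm : β * m < s) : tanh s < s / β := by
  have hβm : 0 < β * m := mul_pos hβ hm
  have hs : 0 < s := hβm.trans hsm
  have h := strictConcaveOn_tanh.secant_strict_mono self_mem_Ici hβm.le hs.le hβm.ne' hs.ne' hsm
  rw [htanh, tanh_zero, sub_zero, sub_zero, sub_zero, sub_zero, div_mul_cancel_right₀ hm.ne',
    div_lt_iff₀ hs] at h
  rwa [inv_mul_eq_div] at h

theorem strictAntiOn_Gbeta (hβ : 0 < β) (hm : 0 < m) (htanh : tanh (β * m) = m) :
    StrictAntiOn (Gbeta β) (Icc 0 (β * m)) := by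
  refine strictAntiOn_of_deriv_neg (convex_Icc _ _) (continuous_Gbeta β).continuousOn
    fun s hs => ?_
  rw [interior_Icc] at hs
  rw [(hasDerivAt_Gbeta β s).deriv, sub_neg]
  exact div_lt_tanh_of_lt hβ hm htanh hs.1 hs.2

theorem strictMonoOn_Gbeta (hβ : 0 < β) (hm : 0 < m) (htanh : tanh (β * m) = m) :
    StrictMonoOn (Gbeta β) (Ici (β * m)) := by
  refine strictMonoOn_of_deriv_pos (convex_Ici _) (continuous_Gbeta β).continuousOn
    fun s hs => ?_
  rw [interior_Ici] at hs
  rw [(hasDerivAt_Gbeta β s).deriv, sub_pos]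
  exact tanh_lt_div_of_lt hβ hm htanh hs

theorem integrable_exp_neg_Gbeta (hβ : 0 < β) : Integrable fun s => exp (-Gbeta β s) := by
  have hb : 0 < 1 / (4 * β) := by positivity
  refine ((integrable_exp_neg_mul_sq hb).const_mul (exp β)).mono'
    (continuous_exp.comp (continuous_Gbeta β).neg).aestronglyMeasurable (ae_of_all _ fun s => ?_)
  rw [norm_of_nonneg (exp_pos _).le, ← exp_add, exp_le_exp, Gbeta]
  have hcosh : log (cosh s) ≤ |s| := (log_le_iff_le_exp (cosh_pos s)).2 (cosh_le_exp_abs s)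
  have habs : |s| ≤ s ^ 2 / (4 * β) + β := by
    rw [div_add' _ _ _ (by positivity), le_div_iff₀ (by positivity)]
    nlinarith [sq_nonneg (|s| - 2 * β), sq_abs s]
  have h2 : s ^ 2 / (2 * β) = 2 * (s ^ 2 / (4 * β)) := by field_simp; ring
  have h4 : -(1 / (4 * β)) * s ^ 2 = -(s ^ 2 / (4 * β)) := by ring
  linarith

end Shape

section WellSeparatedMinimum

variable {f : ℝ → ℝ} {a b : ℝ}

theorem StrictAntiOn.le_of_strictMonoOn (hanti : StrictAntiOn f (Icc a b))
    (hmono : StrictMonoOn f (Ici b)) (hab : a ≤ b) {s : ℝ} (hs : a ≤ s) : f b ≤ f s := by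
  rcases le_total s b with hsb | hbs
  · exact hanti.antitoneOn ⟨hs, hsb⟩ ⟨hab, le_rfl⟩ hsb
  · exact hmono.monotoneOn self_mem_Ici hbs hbs

theorem StrictAntiOn.exists_add_le_of_strictMonoOn (hanti : StrictAntiOn f (Icc a b))
    (hmono : StrictMonoOn f (Ici b)) (hab : a < b) {U : Set ℝ} (hU : U ∈ 𝓝 b) :
    ∃ η > 0, ∀ s, a ≤ s → s ∉ U → f b + η ≤ f s := by
  obtain ⟨ε, hε, hball⟩ := Metric.mem_nhds_iff.1 hU
  set δ := min (ε / 2) ((b - a) / 2)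
  have hδ : 0 < δ := lt_min (half_pos hε) (half_pos (sub_pos.2 hab))
  have hδε : δ < ε := (min_le_left _ _).trans_lt (half_lt_self hε)
  have haδ : a < b - δ := by have := min_le_right (ε / 2) ((b - a) / 2); linarith
  have hleft : f b < f (b - δ) := hanti ⟨haδ.le, by linarith⟩ ⟨hab.le, le_rfl⟩ (by linarith)
  have hright : f b < f (b + δ) := hmono self_mem_Ici (by simp [hδ.le]) (by linarith)
  refine ⟨min (f (b - δ)) (f (b + δ)) - f b, sub_pos.2 (lt_min hleft hright), fun s hs hsU => ?_⟩
  have hfar : s < b - δ ∨ b + δ < s := by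
    by_contra! h
    exact hsU (hball (by rw [Metric.mem_ball, Real.dist_eq, abs_lt]; constructor <;> linarith))
  rcases hfar with h | h
  · have := hanti ⟨hs, by linarith⟩ ⟨haδ.le, by linarith⟩ h
    linarith [min_le_left (f (b - δ)) (f (b + δ))]
  · have := hmono (show b ≤ b + δ by linarith) (show b ≤ s by linarith) h
    linarith [min_le_right (f (b - δ)) (f (b + δ))]

end WellSeparatedMinimum

theorem exp_neg_mul_le_of_le {x x₀ c G : ℝ} (hx : x₀ ≤ x) (hG : c ≤ G) :
    exp (-(x * G)) ≤ exp (-((x - x₀) * c)) * exp (-(x₀ * G)) := by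
  rw [← exp_add, exp_le_exp]
  nlinarith [mul_nonneg (sub_nonneg.2 hx) (sub_nonneg.2 hG)]

section Laplace

variable {α : Type*} [MeasurableSpace α] {μ : Measure α}

theorem abs_integral_mul_sub_le {w g : α → ℝ} {U : Set α} {c C ε : ℝ} (hw : ∀ s, 0 ≤ w s)
    (hwi : Integrable w μ) (hgm : AEStronglyMeasurable g μ) (hU : MeasurableSet U)
    (hC : ∀ s, |g s - c| ≤ C) (hε₀ : 0 ≤ ε) (hε : ∀ s ∈ U, |g s - c| ≤ ε) :
    |∫ s, g s * w s ∂μ - c * ∫ s, w s ∂μ| ≤ ε * ∫ s, w s ∂μ + C * ∫ s in Uᶜ, w s ∂μ := by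
  have hdi : Integrable (fun s => (g s - c) * w s) μ :=
    hwi.bdd_mul (hgm.sub aestronglyMeasurable_const) (ae_of_all _ hC)
  have hgi : Integrable (fun s => g s * w s) μ :=
    (hdi.add (hwi.const_mul c)).congr (ae_of_all _ fun s => by simp only [Pi.add_apply]; ring)
  have hai : Integrable (fun s => |g s - c| * w s) μ :=
    hdi.abs.congr (ae_of_all _ fun s => by simp only [abs_mul, abs_of_nonneg (hw s)])
  have hwU : ∫ s in U, w s ∂μ ≤ ∫ s, w s ∂μ := setIntegral_le_integral hwi (ae_of_all _ hw)
  calc |∫ s, g s * w s ∂μ - c * ∫ s, w s ∂μ|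
      = |∫ s, (g s - c) * w s ∂μ| := by
        rw [← integral_const_mul, ← integral_sub hgi (hwi.const_mul c)]
        simp_rw [sub_mul]
    _ ≤ ∫ s, |g s - c| * w s ∂μ := abs_integral_le_integral_abs.trans_eq
        (integral_congr_ae (ae_of_all _ fun s => by simp only [abs_mul, abs_of_nonneg (hw s)]))
    _ = ∫ s in U, |g s - c| * w s ∂μ + ∫ s in Uᶜ, |g s - c| * w s ∂μ :=
        (integral_add_compl hU hai).symm
    _ ≤ ∫ s in U, ε * w s ∂μ + ∫ s in Uᶜ, C * w s ∂μ := add_le_add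
        (setIntegral_mono_on hai.integrableOn (hwi.const_mul ε).integrableOn hU
          fun s hs => mul_le_mul_of_nonneg_right (hε s hs) (hw s))
        (setIntegral_mono_on hai.integrableOn (hwi.const_mul C).integrableOn hU.compl
          fun s _ => mul_le_mul_of_nonneg_right (hC s) (hw s))
    _ ≤ ε * ∫ s, w s ∂μ + C * ∫ s in Uᶜ, w s ∂μ := by
      rw [integral_const_mul, integral_const_mul]
      gcongr

theorem integrable_exp_neg_mul_of_le {G : α → ℝ} {c x₀ x : ℝ} (hGm : AEMeasurable G μ)
    (hc : ∀ᵐ s ∂μ, c ≤ G s) (hint : Integrable (fun s => exp (-(x₀ * G s))) μ) (hx : x₀ ≤ x) :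
    Integrable (fun s => exp (-(x * G s))) μ :=
  (hint.const_mul (exp (-((x - x₀) * c)))).mono'
    ((hGm.const_mul x).neg.exp.aestronglyMeasurable)
    (hc.mono fun s hs => by
      rw [norm_of_nonneg (exp_pos _).le]
      exact exp_neg_mul_le_of_le hx hs)

theorem setIntegral_exp_neg_mul_le {G : α → ℝ} {S : Set α} {c x₀ x : ℝ} (hS : MeasurableSet S)
    (hc : ∀ᵐ s ∂μ, s ∈ S → c ≤ G s) (hint : Integrable (fun s => exp (-(x₀ * G s))) μ)
    (hx : x₀ ≤ x) :
    ∫ s in S, exp (-(x * G s)) ∂μ ≤ exp (-((x - x₀) * c)) * ∫ s, exp (-(x₀ * G s)) ∂μ := by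
  calc ∫ s in S, exp (-(x * G s)) ∂μ
      ≤ ∫ s in S, exp (-((x - x₀) * c)) * exp (-(x₀ * G s)) ∂μ :=
        integral_mono_of_nonneg (ae_of_all _ fun _ => (exp_pos _).le)
          (hint.const_mul _).integrableOn
          ((ae_restrict_iff' hS).2 (hc.mono fun s hs hsS => exp_neg_mul_le_of_le hx (hs hsS)))
    _ = exp (-((x - x₀) * c)) * ∫ s in S, exp (-(x₀ * G s)) ∂μ := integral_const_mul _ _
    _ ≤ exp (-((x - x₀) * c)) * ∫ s, exp (-(x₀ * G s)) ∂μ :=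
      mul_le_mul_of_nonneg_left
        (setIntegral_le_integral hint (ae_of_all _ fun _ => (exp_pos _).le)) (exp_pos _).le

variable [TopologicalSpace α] [OpensMeasurableSpace α] {s₀ : α}

theorem tendsto_integral_mul_div_integral_of_concentrates {ι : Type*} {l : Filter ι}
    {w : ι → α → ℝ} {g : α → ℝ} {C : ℝ} (hw : ∀ i s, 0 ≤ w i s)
    (hwi : ∀ᶠ i in l, Integrable (w i) μ) (hwpos : ∀ᶠ i in l, 0 < ∫ s, w i s ∂μ)
    (hconc : ∀ U ∈ 𝓝 s₀, MeasurableSet U →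
      Tendsto (fun i => (∫ s in Uᶜ, w i s ∂μ) / ∫ s, w i s ∂μ) l (𝓝 0))
    (hgm : AEStronglyMeasurable g μ) (hgC : ∀ s, |g s| ≤ C) (hg : ContinuousAt g s₀) :
    Tendsto (fun i => (∫ s, g s * w i s ∂μ) / ∫ s, w i s ∂μ) l (𝓝 (g s₀)) := by
  rw [Metric.tendsto_nhds]
  intro ε hε
  set U := interior (g ⁻¹' Metric.ball (g s₀) (ε / 2))
  have hU : U ∈ 𝓝 s₀ := interior_mem_nhds.2 (hg (Metric.ball_mem_nhds _ (half_pos hε)))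
  have hUm : MeasurableSet U := isOpen_interior.measurableSet
  have htail := ((hconc U hU hUm).const_mul (2 * C)).eventually
    (gt_mem_nhds (show 2 * C * 0 < ε / 2 by linarith))
  filter_upwards [hwi, hwpos, htail] with i hi hpos ht
  have hgC' : ∀ s, |g s - g s₀| ≤ 2 * C := fun s =>
    (abs_sub _ _).trans (by linarith [hgC s, hgC s₀])
  have hest := abs_integral_mul_sub_le (hw i) hi hgm hUm hgC' (half_pos hε).le
    fun s hs => by
      have h : s ∈ g ⁻¹' Metric.ball (g s₀) (ε / 2) := interior_subset hs
      rw [mem_preimage, Metric.mem_ball, Real.dist_eq] at h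
      exact h.le
  rw [Real.dist_eq, div_sub' hpos.ne', abs_div, abs_of_pos hpos, div_lt_iff₀ hpos,
    mul_comm (∫ s, w i s ∂μ)]
  rw [mul_div_assoc', div_lt_iff₀ hpos] at ht
  linarith

variable {G : α → ℝ} {x₀ : ℝ}

theorem exists_pos_mul_exp_le_integral_exp [IsLocallyFiniteMeasure μ]
    (hpos : ∀ U ∈ 𝓝 s₀, 0 < μ U) (hGc : ContinuousAt G s₀) (hGm : AEMeasurable G μ)
    (hmin : ∀ᵐ s ∂μ, G s₀ ≤ G s) (hint : Integrable (fun s => exp (-(x₀ * G s))) μ) {η : ℝ}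
    (hη : 0 < η) :
    ∃ a > 0, ∀ x ≥ max x₀ 0, a * exp (-(x * (G s₀ + η))) ≤ ∫ s, exp (-(x * G s)) ∂μ := by
  obtain ⟨n, hn, hnfin⟩ := μ.finiteAt_nhds s₀
  set V := interior ({s | G s < G s₀ + η} ∩ n)
  have hV : V ∈ 𝓝 s₀ :=
    interior_mem_nhds.2 (inter_mem (hGc.eventually (gt_mem_nhds (lt_add_of_pos_right _ hη))) hn)
  have hVfin : μ V < ⊤ := (measure_mono (interior_subset.trans inter_subset_right)).trans_lt hnfin
  refine ⟨μ.real V, ENNReal.toReal_pos (hpos V hV).ne' hVfin.ne, fun x hx => ?_⟩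
  have hx₀ : x₀ ≤ x := le_of_max_le_left hx
  have hx0 : 0 ≤ x := le_of_max_le_right hx
  have hintx := integrable_exp_neg_mul_of_le hGm hmin hint hx₀
  calc μ.real V * exp (-(x * (G s₀ + η))) = ∫ s in V, exp (-(x * (G s₀ + η))) ∂μ := by
        rw [setIntegral_const, smul_eq_mul]
    _ ≤ ∫ s in V, exp (-(x * G s)) ∂μ :=
        setIntegral_mono_on (integrableOn_const hVfin.ne) hintx.integrableOn
          isOpen_interior.measurableSet fun s hs => by
            have hGs : G s < G s₀ + η := (interior_subset hs).1
            gcongr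
    _ ≤ ∫ s, exp (-(x * G s)) ∂μ :=
        setIntegral_le_integral hintx (ae_of_all _ fun _ => (exp_pos _).le)

theorem tendsto_setIntegral_compl_exp_div_integral_exp [IsLocallyFiniteMeasure μ]
    (hpos : ∀ U ∈ 𝓝 s₀, 0 < μ U) (hGc : ContinuousAt G s₀) (hGm : AEMeasurable G μ)
    (hmin : ∀ᵐ s ∂μ, G s₀ ≤ G s)
    (hsep : ∀ U ∈ 𝓝 s₀, ∃ η > 0, ∀ᵐ s ∂μ, s ∉ U → G s₀ + η ≤ G s)
    (hint : Integrable (fun s => exp (-(x₀ * G s))) μ) {U : Set α} (hU : U ∈ 𝓝 s₀)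
    (hUm : MeasurableSet U) :
    Tendsto (fun x => (∫ s in Uᶜ, exp (-(x * G s)) ∂μ) / ∫ s, exp (-(x * G s)) ∂μ) atTop
      (𝓝 0) := by
  -- Off `U` the weight is `O(exp (-x (G s₀ + η)))`, while its total mass is at least a constant
  -- times `exp (-x (G s₀ + η / 2))`, so the ratio decays like `exp (-η x / 2)`.
  obtain ⟨η, hη, hηU⟩ := hsep U hU
  obtain ⟨a, ha, hlow⟩ := exists_pos_mul_exp_le_integral_exp hpos hGc hGm hmin hint (half_pos hη)
  set K := ∫ s, exp (-(x₀ * G s)) ∂μ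
  set B := K * exp (x₀ * (G s₀ + η)) / a with hB
  have hbound : ∀ x ≥ max x₀ 0,
      (∫ s in Uᶜ, exp (-(x * G s)) ∂μ) / ∫ s, exp (-(x * G s)) ∂μ ≤ B * exp (-(η / 2 * x)) := by
    intro x hx
    have hnum := setIntegral_exp_neg_mul_le hUm.compl hηU hint (le_of_max_le_left hx)
    have hexp : exp (-((x - x₀) * (G s₀ + η))) =
        exp (x₀ * (G s₀ + η)) * exp (-(η / 2 * x)) * exp (-(x * (G s₀ + η / 2))) := by
      rw [← exp_add, ← exp_add]
      ring_nf
    calc (∫ s in Uᶜ, exp (-(x * G s)) ∂μ) / ∫ s, exp (-(x * G s)) ∂μ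
        ≤ exp (-((x - x₀) * (G s₀ + η))) * K / (a * exp (-(x * (G s₀ + η / 2)))) :=
          div_le_div₀ (by positivity) hnum (by positivity) (hlow x hx)
      _ = B * exp (-(η / 2 * x)) := by
          rw [hexp, hB]
          field_simp
  have hdecay : Tendsto (fun x => B * exp (-(η / 2 * x))) atTop (𝓝 0) := by
    simpa using (tendsto_exp_neg_atTop_nhds_zero.comp
      (tendsto_id.const_mul_atTop (half_pos hη))).const_mul B
  refine tendsto_of_tendsto_of_tendsto_of_le_of_le' tendsto_const_nhds hdecay
    (Eventually.of_forall fun x => ?_) ((eventually_ge_atTop _).mono hbound)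
  exact div_nonneg (integral_nonneg fun _ => (exp_pos _).le)
    (integral_nonneg fun _ => (exp_pos _).le)

theorem tendsto_integral_mul_exp_div_integral_exp [IsLocallyFiniteMeasure μ] {g : α → ℝ}
    {C : ℝ} (hpos : ∀ U ∈ 𝓝 s₀, 0 < μ U) (hGc : ContinuousAt G s₀) (hGm : AEMeasurable G μ)
    (hmin : ∀ᵐ s ∂μ, G s₀ ≤ G s)
    (hsep : ∀ U ∈ 𝓝 s₀, ∃ η > 0, ∀ᵐ s ∂μ, s ∉ U → G s₀ + η ≤ G s)
    (hint : Integrable (fun s => exp (-(x₀ * G s))) μ) (hgm : AEStronglyMeasurable g μ)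
    (hgC : ∀ s, |g s| ≤ C) (hg : ContinuousAt g s₀) :
    Tendsto (fun x => (∫ s, g s * exp (-(x * G s)) ∂μ) / ∫ s, exp (-(x * G s)) ∂μ) atTop
      (𝓝 (g s₀)) := by
  obtain ⟨a, ha, hlow⟩ := exists_pos_mul_exp_le_integral_exp hpos hGc hGm hmin hint one_pos
  exact tendsto_integral_mul_div_integral_of_concentrates (fun _ _ => (exp_pos _).le)
    ((eventually_ge_atTop x₀).mono fun x hx => integrable_exp_neg_mul_of_le hGm hmin hint hx)
    ((eventually_ge_atTop _).mono fun x hx => (mul_pos ha (exp_pos _)).trans_le (hlow x hx))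
    (fun U hU hUm => tendsto_setIntegral_compl_exp_div_integral_exp hpos hGc hGm hmin hsep hint
      hU hUm) hgm hgC hg

end Laplace

theorem Zconst_nonneg (β x : ℝ) : 0 ≤ Zconst β x :=
  setIntegral_nonneg measurableSet_Ioo fun t ht =>
    div_nonneg (exp_pos _).le (by nlinarith [ht.1, ht.2])

theorem setIntegral_nuN (α β : ℝ) (N : ℕ) {A : Set ℝ} (hA : MeasurableSet A) (g : ℝ → ℝ) :
    ∫ t in A, g t ∂nuN α β N =
      (∫ t in A ∩ Ioo (-1) 1, g t * (exp (-((N : ℝ) ^ α * Fbeta β t) / 2) / (1 - t ^ 2))) /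
        Zconst β ((N : ℝ) ^ α) := by
  rw [nuN, Measure.restrict_smul, integral_smul_measure, restrict_withDensity hA,
    Measure.restrict_restrict hA,
    integral_withDensity_eq_integral_toReal_smul (by unfold Fbeta; fun_prop)
      (ae_of_all _ fun _ => ENNReal.ofReal_lt_top), ENNReal.toReal_inv,
    ENNReal.toReal_ofReal (Zconst_nonneg _ _), smul_eq_mul, inv_mul_eq_div]
  congr 1
  refine setIntegral_congr_fun (hA.inter measurableSet_Ioo) fun t ht => ?_
  rw [ENNReal.toReal_ofReal (div_nonneg (exp_pos _).le (by nlinarith [ht.2.1, ht.2.2])),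
    smul_eq_mul, mul_comm]

theorem setIntegral_image_tanh_mul_exp_Fbeta (β x : ℝ) {S : Set ℝ} (hS : MeasurableSet S)
    (g : ℝ → ℝ) :
    ∫ t in tanh '' S, g t * (exp (-(x * Fbeta β t) / 2) / (1 - t ^ 2)) =
      ∫ s in S, g (tanh s) * exp (-(x * Gbeta β s)) := by
  rw [integral_image_tanh hS]
  simp_rw [mul_left_comm, one_sub_tanh_sq_mul_exp_Fbeta]

theorem Zconst_eq_integral_exp_Gbeta (β x : ℝ) :
    Zconst β x = ∫ s, exp (-(x * Gbeta β s)) := by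
  have h := setIntegral_image_tanh_mul_exp_Fbeta β x MeasurableSet.univ fun _ => 1
  rw [tanh_bijOn.image_eq, Measure.restrict_univ] at h
  simpa only [one_mul, Zconst] using h

theorem setIntegral_Icc_nuN (α β : ℝ) (N : ℕ) {a : ℝ} (ha : a ∈ Ioo (-1) 1) (g : ℝ → ℝ) :
    ∫ t in Icc a 1, g t ∂nuN α β N =
      (∫ s in Ici (artanh a), g (tanh s) * exp (-((N : ℝ) ^ α * Gbeta β s))) /
        ∫ s, exp (-((N : ℝ) ^ α * Gbeta β s)) := by
  have hset : Icc a 1 ∩ Ioo (-1) 1 = tanh '' Ici (artanh a) := by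
    rw [tanh_image_Ici, tanh_artanh ha]
    ext t
    simp only [mem_inter_iff, mem_Icc, mem_Ioo, mem_Ico]
    constructor
    · rintro ⟨⟨hat, -⟩, -, ht1⟩
      exact ⟨hat, ht1⟩
    · rintro ⟨hat, ht1⟩
      exact ⟨⟨hat, ht1.le⟩, ha.1.trans_le hat, ht1⟩
  rw [setIntegral_nuN α β N measurableSet_Icc, hset,
    setIntegral_image_tanh_mul_exp_Fbeta _ _ measurableSet_Ici, Zconst_eq_integral_exp_Gbeta]

theorem integral_exp_Gbeta_eq_two_mul (β x : ℝ) :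
    ∫ s, exp (-(x * Gbeta β s)) = 2 * ∫ s in Ioi 0, exp (-(x * Gbeta β s)) := by
  rw [← integral_comp_abs (f := fun s => exp (-(x * Gbeta β s)))]
  simp_rw [Gbeta_abs]

theorem tendsto_setIntegral_Ioi_mul_exp_Gbeta_div {β m : ℝ} (hβ : 0 < β) (hm : 0 < m)
    (htanh : tanh (β * m) = m) {g : ℝ → ℝ} {C : ℝ}
    (hgm : AEStronglyMeasurable g (volume.restrict (Ioi 0))) (hgC : ∀ s, |g s| ≤ C)
    (hg : ContinuousAt g (β * m)) :
    Tendsto (fun x => (∫ s in Ioi 0, g s * exp (-(x * Gbeta β s))) /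
      ∫ s in Ioi 0, exp (-(x * Gbeta β s))) atTop (𝓝 (g (β * m))) := by
  have hβm : 0 < β * m := mul_pos hβ hm
  have hanti := strictAntiOn_Gbeta hβ hm htanh
  have hmono := strictMonoOn_Gbeta hβ hm htanh
  refine tendsto_integral_mul_exp_div_integral_exp (x₀ := 1) (fun U hU => ?_)
    (continuous_Gbeta β).continuousAt (continuous_Gbeta β).aemeasurable
    ((ae_restrict_iff' measurableSet_Ioi).2 (ae_of_all _ fun s hs =>
      hanti.le_of_strictMonoOn hmono hβm.le (le_of_lt hs)))
    (fun U hU => ?_) (by simpa only [one_mul] using (integrable_exp_neg_Gbeta hβ).restrict)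
    hgm hgC hg
  · rw [Measure.restrict_apply' measurableSet_Ioi]
    exact Measure.measure_pos_of_mem_nhds _ (inter_mem hU (Ioi_mem_nhds hβm))
  · obtain ⟨η, hη, h⟩ := hanti.exists_add_le_of_strictMonoOn hmono hβm hU
    exact ⟨η, hη, (ae_restrict_iff' measurableSet_Ioi).2 (ae_of_all _ fun s hs => h s hs.le)⟩

theorem setIntegral_Ioi_indicator_Ici_mul {c : ℝ} (hc : 0 < c) (f h : ℝ → ℝ) :
    ∫ s in Ioi 0, (Ici c).indicator f s * h s = ∫ s in Ici c, f s * h s := by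
  simpa only [indicator_mul_left, inter_eq_right.2 (Ici_subset_Ioi.2 hc)] using
    setIntegral_indicator (μ := volume) (s := Ioi 0) (f := fun s => f s * h s)
      (measurableSet_Ici (a := c))

theorem tendsto_setIntegral_Icc_nuN {α β m a : ℝ} (hα : 0 < α) (hβ : 0 < β) (hm : 0 < m)
    (htanh : tanh (β * m) = m) (ha : 0 < a) (ham : a < m) {g : ℝ → ℝ} (hg : Continuous g) :
    Tendsto (fun N : ℕ => ∫ t in Icc a 1, g t ∂nuN α β N) atTop (𝓝 (g m / 2)) := by
  have hm1 : m < 1 := htanh ▸ tanh_lt_one _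
  have ha1 : a ∈ Ioo (-1) 1 := ⟨by linarith, by linarith⟩
  have hc : 0 < artanh a := artanh_pos ⟨ha, by linarith⟩
  have hcβm : artanh a < β * m := by
    rwa [← strictMono_tanh.lt_iff_lt, tanh_artanh ha1, htanh]
  have hgt : Continuous fun s => g (tanh s) := hg.comp continuous_tanh
  obtain ⟨C, hC⟩ := isCompact_Icc.exists_bound_of_continuousOn (hg.continuousOn (s := Icc (-1) 1))
  have hlim := tendsto_setIntegral_Ioi_mul_exp_Gbeta_div
    (g := (Ici (artanh a)).indicator fun s => g (tanh s)) hβ hm htanh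
    (hgt.measurable.indicator measurableSet_Ici).aestronglyMeasurable
    (fun s => (norm_indicator_le_norm_self (fun s => g (tanh s)) s).trans
      (hC (tanh s) ⟨(neg_one_lt_tanh s).le, (tanh_lt_one s).le⟩))
    (hgt.continuousAt.congr (eventuallyEq_of_mem (Ici_mem_nhds hcβm) eqOn_indicator).symm)
  rw [indicator_of_mem (show β * m ∈ Ici (artanh a) from hcβm.le), htanh] at hlim
  refine ((hlim.div_const 2).comp ((tendsto_rpow_atTop hα).comp
    tendsto_natCast_atTop_atTop)).congr fun N => ?_
  rw [Function.comp_apply, Function.comp_apply, setIntegral_Icc_nuN α β N ha1,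
    integral_exp_Gbeta_eq_two_mul, setIntegral_Ioi_indicator_Ici_mul hc]
  ring

/-- For `α > 0`, `β > 1`, every `ℓ ∈ ℕ`:
`lim_{N→∞} ∫_{m/2}^1 (1 + m² - 2mt)^ℓ dν_N(t) = (1/2)(1-m²)^ℓ`. -/
theorem nuN_moment_limit (α β m : ℝ) (hα : 0 < α) (hβ : 1 < β)
    (hm : 0 < m) (htanh : Real.tanh (β * m) = m) (ℓ : ℕ) :
    Tendsto
      (fun N : ℕ => ∫ t in Set.Icc (m / 2) 1, (1 + m ^ 2 - 2 * m * t) ^ ℓ ∂(nuN α β N))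
      atTop (nhds (1 / 2 * (1 - m ^ 2) ^ ℓ)) := by
  convert tendsto_setIntegral_Icc_nuN hα (by linarith) hm htanh (half_pos hm) (half_lt_self hm)
    (g := fun t => (1 + m ^ 2 - 2 * m * t) ^ ℓ) (by fun_prop) using 2
  ring
end
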